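/- arXiv:0707.4385 — 2 statements merged into one kernel-verified Lean document; each statement's English description precedes it below -/
import Mathlib

section
/- For any octonion a and any two purely imaginary orthogonal octonions b, c (i.e., Re(b) = Re(c) = 0 and Re(bc̄) = 0), one has Re((āb)(ca)) = 0. -/
noncomputable section

def Oct : Type := Quaternion ℝ × Quaternion ℝ

namespace Oct

def fst (p : Oct) : Quaternion ℝ := Prod.fst p
def snd (p : Oct) : Quaternion ℝ := Prod.snd p

instance : NormedAddCommGroup Oct :=
  inferInstanceAs (NormedAddCommGroup (Quaternion ℝ × Quaternion ℝ))
instance : NormedSpace ℝ Oct :=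
  inferInstanceAs (NormedSpace ℝ (Quaternion ℝ × Quaternion ℝ))
instance : MeasurableSpace Oct := borel Oct

instance : One Oct := ⟨((1 : Quaternion ℝ), (0 : Quaternion ℝ))⟩

/-- Cayley–Dickson multiplication on 𝕆 = ℍ × ℍ. -/
instance : Mul Oct := ⟨fun p q =>
  (fst p * fst q - star (snd q) * snd p, snd q * fst p + snd p * star (fst q))⟩

/-- Octonionic conjugation. -/
def conj (p : Oct) : Oct := (star (fst p), -(snd p))

/-- Real part of an octonion. -/
def re (p : Oct) : ℝ := (fst p).re

/-- |p|² = Re(p p̄). -/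
def normSq (p : Oct) : ℝ := re (p * conj p)

/-- Embedding of the reals into the octonions. -/
def ofReal (r : ℝ) : Oct := ((r : Quaternion ℝ), (0 : Quaternion ℝ))

end Oct


/-!
Composition of norms gives `Re((āb)(ca)) = |a|² Re(bc)`, a polynomial identity in the
coordinates. Since `Re(bc) + Re(bc̄) = 2 Re(b) Re(c)`, a purely imaginary `b` has
`Re(bc) = -Re(bc̄)`, which vanishes by orthogonality.
-/

namespace Oct

lemma fst_mul (p q : Oct) : fst (p * q) = fst p * fst q - star (snd q) * snd p := rfl
lemma snd_mul (p q : Oct) : snd (p * q) = snd q * fst p + snd p * star (fst q) := rfl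
lemma fst_conj (p : Oct) : fst (conj p) = star (fst p) := rfl
lemma snd_conj (p : Oct) : snd (conj p) = -snd p := rfl

theorem re_conj_mul_mul_mul (a b c : Oct) :
    re ((conj a * b) * (c * a)) = normSq a * re (b * c) := by
  simp only [normSq, re, fst_mul, snd_mul, fst_conj, snd_conj, Quaternion.re_sub, Quaternion.re_mul,
    Quaternion.imI_mul, Quaternion.imJ_mul, Quaternion.imK_mul, Quaternion.imI_sub, Quaternion.imJ_sub,
    Quaternion.imK_sub, Quaternion.re_add, Quaternion.imI_add, Quaternion.imJ_add, Quaternion.imK_add,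
    Quaternion.re_star, Quaternion.imI_star, Quaternion.imJ_star, Quaternion.imK_star,
    Quaternion.re_neg, Quaternion.imI_neg, Quaternion.imJ_neg, Quaternion.imK_neg]
  ring

theorem re_mul_add_re_mul_conj (b c : Oct) :
    re (b * c) + re (b * conj c) = 2 * re b * re c := by
  simp only [re, fst_mul, fst_conj, snd_conj, star_neg, neg_mul, sub_neg_eq_add,
    Quaternion.re_sub, Quaternion.re_add, Quaternion.re_mul, Quaternion.re_star,
    Quaternion.imI_star, Quaternion.imJ_star, Quaternion.imK_star]
  ring

end Oct

theorem re_conj_mul_orthogonal_general (a b c : Oct)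
    (hb : Oct.re b = 0)
    (hbc : Oct.re (b * Oct.conj c) = 0) :
    Oct.re ((Oct.conj a * b) * (c * a)) = 0 := by
  have hbc' : Oct.re (b * c) = 0 := by
    have h := Oct.re_mul_add_re_mul_conj b c
    rwa [hb, hbc, add_zero, mul_zero, zero_mul] at h
  rw [Oct.re_conj_mul_mul_mul, hbc', mul_zero]

/-- If b, c are purely imaginary and orthogonal then Re((āb)(ca)) = 0. -/
theorem re_conj_mul_orthogonal (a b c : Oct)
    (hb : Oct.re b = 0) (hc : Oct.re c = 0)
    (hbc : Oct.re (b * Oct.conj c) = 0) :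
    Oct.re ((Oct.conj a * b) * (c * a)) = 0 :=
  re_conj_mul_orthogonal_general a b c hb hbc
end
end

section
/- A 2×2 octonionic hermitian matrix A is non-negative definite if and only if Re(Tr(AB)) ≥ 0 for every non-negative definite octonionic hermitian 2×2 matrix B, where Tr denotes the sum of diagonal entries. -/
/-!
Viewing `𝕆 = ℍ × ℍ` as the `L²` product `WithLp 2 (ℍ × ℍ)` (not with the sup norm that `Oct`
carries), `|p|²` and `Re(p q̄)` become `‖p‖²` and `⟪p, q⟫`, so the claim is the self-duality of the cone
`{(a, b, p) | 0 ≤ a, 0 ≤ b, ‖p‖² ≤ a b}` in any real inner product space. One direction is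
Cauchy–Schwarz followed by AM–GM: `|⟪p, q⟫| ≤ √(ab · cd) ≤ (ac + bd) / 2`. Conversely, `q = 0`
gives `a, b ≥ 0`, and testing against `c = x², d = ‖p‖², q = -x p` makes
`a x² - 2‖p‖² x + b‖p‖²` nonnegative for all `x`; its discriminant gives `‖p‖⁴ ≤ ab ‖p‖²`.
-/

noncomputable section

open RealInnerProductSpace

section SelfDualCone

variable {E : Type*} [NormedAddCommGroup E] [InnerProductSpace ℝ E]

theorem add_two_inner_nonneg_of_sq_norm_le_mul {a b c d : ℝ} {p q : E} (ha : 0 ≤ a)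
    (hb : 0 ≤ b) (hc : 0 ≤ c) (hd : 0 ≤ d) (hp : ‖p‖ ^ 2 ≤ a * b) (hq : ‖q‖ ^ 2 ≤ c * d) :
    0 ≤ a * c + b * d + 2 * ⟪p, q⟫ := by
  have hpq : ⟪p, q⟫ ^ 2 ≤ (a * b) * (c * d) := by
    rw [← sq_abs]
    calc |⟪p, q⟫| ^ 2 ≤ (‖p‖ * ‖q‖) ^ 2 := by gcongr; exact abs_real_inner_le_norm p q
      _ = ‖p‖ ^ 2 * ‖q‖ ^ 2 := mul_pow _ _ _
      _ ≤ (a * b) * (c * d) := mul_le_mul hp hq (sq_nonneg _) (mul_nonneg ha hb)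
  have hsq : (-(2 * ⟪p, q⟫)) ^ 2 ≤ (a * c + b * d) ^ 2 := by
    nlinarith [sq_nonneg (a * c - b * d)]
  linarith [(abs_le_of_sq_le_sq' hsq (by positivity)).2]

theorem sq_norm_le_mul_of_forall_add_two_inner_nonneg {a b : ℝ} {p : E}
    (h : ∀ (c d : ℝ) (q : E), 0 ≤ c → 0 ≤ d → ‖q‖ ^ 2 ≤ c * d →
      0 ≤ a * c + b * d + 2 * ⟪p, q⟫) :
    0 ≤ a ∧ 0 ≤ b ∧ ‖p‖ ^ 2 ≤ a * b := by
  have ha : 0 ≤ a := by simpa using h 1 0 0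
  have hb : 0 ≤ b := by simpa using h 0 1 0
  have hquad : ∀ x : ℝ, 0 ≤ a * (x * x) + (-2 * ‖p‖ ^ 2) * x + b * ‖p‖ ^ 2 := by
    intro x
    have hx := h (x * x) (‖p‖ ^ 2) (-x • p) (mul_self_nonneg x) (sq_nonneg _)
      (le_of_eq (by rw [norm_smul, mul_pow, Real.norm_eq_abs, sq_abs]; ring))
    rw [inner_smul_right, real_inner_self_eq_norm_sq] at hx
    linarith
  have hdiscr := discrim_le_zero hquad
  rw [discrim] at hdiscr
  exact ⟨ha, hb, by nlinarith [sq_nonneg ‖p‖, mul_nonneg ha hb]⟩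

theorem sq_norm_le_mul_iff_forall_add_two_inner_nonneg (a b : ℝ) (p : E) :
    (0 ≤ a ∧ 0 ≤ b ∧ ‖p‖ ^ 2 ≤ a * b) ↔
      ∀ (c d : ℝ) (q : E), 0 ≤ c → 0 ≤ d → ‖q‖ ^ 2 ≤ c * d →
        0 ≤ a * c + b * d + 2 * ⟪p, q⟫ :=
  ⟨fun ⟨ha, hb, hp⟩ _ _ _ hc hd hq => add_two_inner_nonneg_of_sq_norm_le_mul ha hb hc hd hp hq,
    sq_norm_le_mul_of_forall_add_two_inner_nonneg⟩

end SelfDualCone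

namespace Oct

def toL2 : Oct ≃ WithLp 2 (Quaternion ℝ × Quaternion ℝ) :=
  (WithLp.equiv 2 (Quaternion ℝ × Quaternion ℝ)).symm

theorem re_mul_conj (p q : Oct) : re (p * conj q) = ⟪toL2 p, toL2 q⟫ := by
  rw [WithLp.prod_inner_apply, Quaternion.inner_def, Quaternion.inner_def]
  show (p.1 * star q.1 - star (-q.2) * p.2).re = (p.1 * star q.1).re + (p.2 * star q.2).re
  simp only [star_neg, neg_mul, sub_neg_eq_add, Quaternion.re_add, Quaternion.re_mul,
    Quaternion.re_star, Quaternion.imI_star, Quaternion.imJ_star, Quaternion.imK_star]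
  ring

theorem normSq_eq_norm_sq (p : Oct) : normSq p = ‖toL2 p‖ ^ 2 := by
  rw [normSq, re_mul_conj, real_inner_self_eq_norm_sq]

end Oct

/-- A = [[a,p],[p̄,b]] is non-negative definite iff Re(Tr(AB)) ≥ 0 for all non-negative
definite octonionic hermitian B = [[c,q],[q̄,d]]. -/
theorem nonneg_iff_trace_pairing (a b : ℝ) (p : Oct) :
    (0 ≤ a ∧ 0 ≤ b ∧ Oct.normSq p ≤ a * b) ↔
      (∀ (c d : ℝ) (q : Oct), 0 ≤ c → 0 ≤ d → Oct.normSq q ≤ c * d →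
        0 ≤ a * c + b * d + 2 * Oct.re (p * Oct.conj q)) := by
  simp only [Oct.normSq_eq_norm_sq, Oct.re_mul_conj,
    sq_norm_le_mul_iff_forall_add_two_inner_nonneg]
  exact forall₂_congr fun c d => Oct.toL2.forall_congr_right.symm
end
end
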